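/- Let g = [[α, β̄],[β, ᾱ]] ∈ SU(1,1), and I₁ = diag(i,−i), I₂ = [[0,1],[1,0]]. Then g(I₁+I₂)g⁻¹ = I₁ + I₂ if and only if there exists t ∈ ℝ with β = t and α = it ± 1, i.e. g = ± [[1 + it, t],[t, 1 − it]]. -/

import Mathlib

/-!
Since `det g = |α|² - |β|² = 1`, `g` is invertible, so `g` fixes `I₁ + I₂ = !![I, 1; 1, -I]` under
conjugation iff it commutes with it. Comparing entries, this happens iff `β = Im α`; then the
determinant condition reads `(Re α)² = 1`, giving the two signs.
-/

open Matrix Complex ComplexConjugate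

theorem Matrix.mul_mul_inv_eq_self_iff_mul_comm {n R : Type*} [Fintype n] [DecidableEq n]
    [CommRing R] {A : Matrix n n R} (hA : IsUnit A.det) (X : Matrix n n R) :
    A * X * A⁻¹ = X ↔ A * X = X * A :=
  letI := A.invertibleOfIsUnitDet hA
  mul_inv_eq_iff_eq_mul_of_invertible A (A * X) X

def su11Matrix (α β : ℂ) : Matrix (Fin 2) (Fin 2) ℂ := !![α, conj β; β, conj α]

theorem su11Matrix_inj {α β α' β' : ℂ} : su11Matrix α β = su11Matrix α' β' ↔ α = α' ∧ β = β' := by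
  simp only [su11Matrix, EmbeddingLike.apply_eq_iff_eq, vecCons_inj, and_true]
  exact ⟨fun h => ⟨h.1.1, h.2.1⟩, fun ⟨hα, hβ⟩ => by simp [hα, hβ]⟩

theorem neg_su11Matrix (α β : ℂ) : -su11Matrix α β = su11Matrix (-α) (-β) := by
  simp [su11Matrix]

theorem su11Matrix_one_add_I_mul (t : ℝ) :
    su11Matrix (1 + I * t) t = !![1 + I * t, (t : ℂ); (t : ℂ), 1 - I * t] := by
  simp [su11Matrix, sub_eq_add_neg]

theorem det_su11Matrix (α β : ℂ) : (su11Matrix α β).det = (normSq α - normSq β : ℝ) := by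
  rw [su11Matrix, det_fin_two_of, mul_conj, mul_comm, mul_conj, ofReal_sub]

theorem su11Matrix_mul_comm_iff (α β : ℂ) :
    su11Matrix α β * !![I, 1; 1, -I] = !![I, 1; 1, -I] * su11Matrix α β ↔ β = α.im := by
  have hα : α - conj α = 2 * I * α.im := by rw [sub_conj]; push_cast; ring
  rw [su11Matrix, mul_fin_two, mul_fin_two]
  simp only [EmbeddingLike.apply_eq_iff_eq, vecCons_inj, and_true]
  constructor
  · rintro ⟨-, ⟨h10, -⟩⟩
    have h2I : 2 * I * β = 2 * I * α.im := by linear_combination h10 + hα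
    simpa using h2I
  · rintro rfl
    simp only [conj_ofReal]
    exact ⟨⟨by ring, by linear_combination hα⟩, by linear_combination -hα, by ring⟩

theorem eq_im_iff_exists_of_normSq_sub_eq_one {α β : ℂ} (h : normSq α - normSq β = 1) :
    β = α.im ↔ ∃ t : ℝ, (α = 1 + I * t ∧ β = t) ∨ (α = -(1 + I * t) ∧ β = -t) := by
  constructor
  · rintro rfl
    have hre : α.re * α.re = 1 := by simpa [normSq_apply] using h
    rcases mul_self_eq_one_iff.mp hre with hre₁ | hre₁
    · exact ⟨α.im, Or.inl ⟨Complex.ext (by simp [hre₁]) (by simp), rfl⟩⟩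
    · exact ⟨-α.im, Or.inr ⟨Complex.ext (by simp [hre₁]) (by simp), by simp⟩⟩
  · rintro ⟨t, ⟨rfl, rfl⟩ | ⟨rfl, rfl⟩⟩ <;> simp

/-- for `g = [[α, β̄],[β, ᾱ]] ∈ SU(1,1)`,
`g (I₁ + I₂) g⁻¹ = I₁ + I₂` iff `g = ±[[1+it, t],[t, 1-it]]` for some `t ∈ ℝ`. -/
theorem stabilizer_of_I1_plus_I2 (α β : ℂ)
    (h : Complex.normSq α - Complex.normSq β = 1) :
    let g : Matrix (Fin 2) (Fin 2) ℂ := !![α, starRingEnd ℂ β; β, starRingEnd ℂ α]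
    let I₁ : Matrix (Fin 2) (Fin 2) ℂ := !![I, 0; 0, -I]
    let I₂ : Matrix (Fin 2) (Fin 2) ℂ := !![0, 1; 1, 0]
    (g * (I₁ + I₂) * g⁻¹ = I₁ + I₂ ↔
      ∃ t : ℝ, g = !![1 + I * t, (t : ℂ); (t : ℂ), 1 - I * t] ∨
               g = -!![1 + I * t, (t : ℂ); (t : ℂ), 1 - I * t]) := by
  intro g I₁ I₂
  have hg : g = su11Matrix α β := rfl
  have hN : I₁ + I₂ = !![I, 1; 1, -I] := by simp [I₁, I₂]
  have hdet : IsUnit g.det := by simp [hg, det_su11Matrix, h]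
  rw [mul_mul_inv_eq_self_iff_mul_comm hdet, hN, hg, su11Matrix_mul_comm_iff,
    eq_im_iff_exists_of_normSq_sub_eq_one h]
  simp only [← su11Matrix_one_add_I_mul, neg_su11Matrix, su11Matrix_inj]
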